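/- arXiv:1501.00214 — 5 statements merged into one kernel-verified Lean document; each statement's English description precedes it below -/
import Mathlib

section
/- Let A be a bounded J-self-adjoint operator on a Hilbert space K with fundamental symmetry J (i.e. JA = A*J), let Γ₀ : H → K be bounded with Γ₀⁺ := Γ₀*J, and suppose Γ₀⁺Γ₀ is boundedly invertible. Set P := Γ₀(Γ₀⁺Γ₀)⁻¹Γ₀⁺ and Ã := (I−P)A(I−P). Suppose z ∈ ℂ is such that A − z is boundedly invertible on K and Ã − z is boundedly invertible on the subspace (I−P)K. Define Q(z) := Γ₀⁺(A−z)⁻¹Γ₀ and define Q̂(z) := (Γ₀⁺Γ₀)⁻¹ Γ₀⁺ { A(I−P)(Ã−z)⁻¹(I−P)A − (A−z) } Γ₀ (Γ₀⁺Γ₀)⁻¹. Then Q(z) · Q̂(z) = −I on H. -/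
open scoped InnerProductSpace

/-- Theorem 2 of the paper: with `Q(z) = Γ₀⁺(A−z)⁻¹Γ₀` and
`Q̂(z) = (Γ₀⁺Γ₀)⁻¹Γ₀⁺{A(I−P)(Ã−z)⁻¹(I−P)A − (A−z)}Γ₀(Γ₀⁺Γ₀)⁻¹`, one has
`Q(z) Q̂(z) = −I`.  Here `RA` is the inverse of `A − z` on `K`, `S` the inverse of
`Γ₀⁺Γ₀`, and `B` the inverse of `Ã − z` on `(I−P)K` extended by `0` on `PK`. -/
theorem inverse_function_representation
    {K H : Type*} [NormedAddCommGroup K] [InnerProductSpace ℂ K] [CompleteSpace K]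
    [NormedAddCommGroup H] [InnerProductSpace ℂ H] [CompleteSpace H]
    (J : K →L[ℂ] K) (hJsa : IsSelfAdjoint J) (hJ2 : J ∘L J = 1)
    (A : K →L[ℂ] K) (hA : J ∘L A = (ContinuousLinearMap.adjoint A) ∘L J)
    (Γ₀ : H →L[ℂ] K)
    (Γplus : K →L[ℂ] H) (hΓplus : Γplus = (ContinuousLinearMap.adjoint Γ₀) ∘L J)
    (S : H →L[ℂ] H) (hS1 : S ∘L (Γplus ∘L Γ₀) = 1) (hS2 : (Γplus ∘L Γ₀) ∘L S = 1)
    (P : K →L[ℂ] K) (hP : P = Γ₀ ∘L S ∘L Γplus)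
    (z : ℂ)
    (RA : K →L[ℂ] K) (hRA1 : RA ∘L (A - z • 1) = 1) (hRA2 : (A - z • 1) ∘L RA = 1)
    (B : K →L[ℂ] K) (hB1 : B ∘L (1 - P) = B) (hB2 : (1 - P) ∘L B = B)
    (hB3 : B ∘L ((1 - P) ∘L A ∘L (1 - P) - z • (1 - P)) = 1 - P)
    (hB4 : ((1 - P) ∘L A ∘L (1 - P) - z • (1 - P)) ∘L B = 1 - P) :
    (Γplus ∘L RA ∘L Γ₀) ∘L
      (S ∘L Γplus ∘L
        (A ∘L (1 - P) ∘L B ∘L (1 - P) ∘L A - (A - z • 1)) ∘L Γ₀ ∘L S)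
      = -1 := by
  have pS1 : ∀ w, S (Γplus (Γ₀ w)) = w := fun w => by
    simpa using DFunLike.congr_fun hS1 w
  have pS2 : ∀ w, Γplus (Γ₀ (S w)) = w := fun w => by
    simpa using DFunLike.congr_fun hS2 w
  have pP : ∀ k, P k = Γ₀ (S (Γplus k)) := fun k => by rw [hP]; rfl
  have pPΓ : ∀ w, P (Γ₀ w) = Γ₀ w := fun w => by rw [pP, pS1]
  have pΓP : ∀ k, Γplus (P k) = Γplus k := fun k => by rw [pP, pS2]
  have pB1 : ∀ k, B (k - P k) = B k := fun k => by
    simpa using DFunLike.congr_fun hB1 k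
  have pPB : ∀ k, P (B k) = 0 := fun k => by
    have h := DFunLike.congr_fun hB2 k
    simp only [ContinuousLinearMap.comp_apply, ContinuousLinearMap.sub_apply,
      ContinuousLinearMap.one_apply] at h
    exact sub_eq_self.mp h
  have pΓB : ∀ k, Γplus (B k) = 0 := fun k => by
    have h := pΓP (B k)
    rw [pPB] at h
    simpa using h.symm
  have pRA1 : ∀ k, RA (A k - z • k) = k := fun k => by
    simpa using DFunLike.congr_fun hRA1 k
  have pKey : ∀ k, P (A (B k)) = A (B k) - z • B k - k + P k := fun k => by
    have h := DFunLike.congr_fun hB4 k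
    simp only [ContinuousLinearMap.comp_apply, ContinuousLinearMap.sub_apply,
      ContinuousLinearMap.smul_apply, ContinuousLinearMap.one_apply, pPB, sub_zero] at h
    have h2 : A (B k) - P (A (B k)) - z • B k = k - P k := h
    linear_combination (norm := abel) -h2
  ext x
  simp only [ContinuousLinearMap.comp_apply, ContinuousLinearMap.sub_apply,
    ContinuousLinearMap.smul_apply, ContinuousLinearMap.one_apply,
    ContinuousLinearMap.neg_apply, pB1, pPB, sub_zero]
  set g := Γ₀ (S x) with hg
  set b := B (A g) with hb
  have h1 : Γ₀ (S (Γplus (A b - (A g - z • g)))) = P (A b - (A g - z • g)) :=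
    (pP _).symm
  rw [h1]
  have hPg : P g = g := pPΓ (S x)
  have h2 : P (A b - (A g - z • g)) = A (b - g) - z • (b - g) := by
    rw [map_sub, map_sub, map_smul, pKey (A g), hPg, map_sub, smul_sub]
    abel
  rw [h2, pRA1, map_sub, pΓB, hg, pS2]
  abel
end

section
/- Under the same setup (A bounded J-self-adjoint, Γ₀⁺Γ₀ boundedly invertible, P := Γ₀(Γ₀⁺Γ₀)⁻¹Γ₀⁺, Ã := (I−P)A(I−P)): for z with A−z invertible on K and Ã−z invertible on (I−P)K, Q(z) = Γ₀⁺(A−z)⁻¹Γ₀ equals Γ₀⁺ W Γ₀, where W is the inverse on PK of the Schur complement P(A−z)P − PA(I−P)(Ã−z)⁻¹(I−P)AP. -/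
open scoped InnerProductSpace

/-- equation (26): `Q(z) = Γ₀⁺ W Γ₀` where `W` is the inverse on `PK`
of the Schur complement `P(A−z)P − PA(I−P)(Ã−z)⁻¹(I−P)AP`. -/
theorem Q_equals_schur_inverse
    {K H : Type*} [NormedAddCommGroup K] [InnerProductSpace ℂ K] [CompleteSpace K]
    [NormedAddCommGroup H] [InnerProductSpace ℂ H] [CompleteSpace H]
    (J : K →L[ℂ] K) (hJsa : IsSelfAdjoint J) (hJ2 : J ∘L J = 1)
    (A : K →L[ℂ] K) (hA : J ∘L A = (ContinuousLinearMap.adjoint A) ∘L J)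
    (Γ₀ : H →L[ℂ] K)
    (Γplus : K →L[ℂ] H) (hΓplus : Γplus = (ContinuousLinearMap.adjoint Γ₀) ∘L J)
    (S : H →L[ℂ] H) (hS1 : S ∘L (Γplus ∘L Γ₀) = 1) (hS2 : (Γplus ∘L Γ₀) ∘L S = 1)
    (P : K →L[ℂ] K) (hP : P = Γ₀ ∘L S ∘L Γplus)
    (z : ℂ)
    (RA : K →L[ℂ] K) (hRA1 : RA ∘L (A - z • 1) = 1) (hRA2 : (A - z • 1) ∘L RA = 1)
    (B : K →L[ℂ] K) (hB1 : B ∘L (1 - P) = B) (hB2 : (1 - P) ∘L B = B)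
    (hB3 : B ∘L ((1 - P) ∘L A ∘L (1 - P) - z • (1 - P)) = 1 - P)
    (hB4 : ((1 - P) ∘L A ∘L (1 - P) - z • (1 - P)) ∘L B = 1 - P)
    -- `W` : the inverse, on `PK`, of the Schur complement (extended by `0` on `(I−P)K`)
    (W : K →L[ℂ] K) (hW1 : W ∘L P = W) (hW2 : P ∘L W = W)
    (hW3 : W ∘L (P ∘L (A - z • 1) ∘L P
        - P ∘L A ∘L (1 - P) ∘L B ∘L (1 - P) ∘L A ∘L P) = P)
    (hW4 : (P ∘L (A - z • 1) ∘L P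
        - P ∘L A ∘L (1 - P) ∘L B ∘L (1 - P) ∘L A ∘L P) ∘L W = P) :
    Γplus ∘L RA ∘L Γ₀ = Γplus ∘L W ∘L Γ₀ := by
  -- Basic projection facts
  have hPG : P ∘L Γ₀ = Γ₀ := by
    rw [hP, ContinuousLinearMap.comp_assoc, ContinuousLinearMap.comp_assoc, hS1,
      ContinuousLinearMap.one_def, ContinuousLinearMap.comp_id]
  have hGP : Γplus ∘L P = Γplus := by
    rw [hP, ← ContinuousLinearMap.comp_assoc, ← ContinuousLinearMap.comp_assoc, hS2,
      ContinuousLinearMap.one_def, ContinuousLinearMap.id_comp]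
  have hPP : P * P = P := by
    have h : P ∘L P = P := by
      calc P ∘L P = P ∘L (Γ₀ ∘L (S ∘L Γplus)) := by nth_rewrite 2 [hP]; rfl
        _ = (P ∘L Γ₀) ∘L (S ∘L Γplus) := (ContinuousLinearMap.comp_assoc _ _ _).symm
        _ = Γ₀ ∘L (S ∘L Γplus) := by rw [hPG]
        _ = P := hP.symm
    simpa [ContinuousLinearMap.mul_def] using h
  -- Move to the ring `K →L[ℂ] K`
  simp only [← ContinuousLinearMap.mul_def] at hRA1 hRA2 hB1 hB2 hB3 hB4 hW1 hW2 hW3 hW4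
  obtain ⟨Q, hQ⟩ : ∃ Q' : K →L[ℂ] K, Q' = 1 - P := ⟨_, rfl⟩
  obtain ⟨M, hM⟩ : ∃ M' : K →L[ℂ] K, M' = A - z • 1 := ⟨_, rfl⟩
  rw [← hQ] at hB1 hB2 hB3 hB4 hW3 hW4
  rw [← hM] at hRA1 hRA2 hW3 hW4
  have hPQ : P * Q = 0 := by rw [hQ, mul_sub, mul_one, hPP, sub_self]
  have hQP : Q * P = 0 := by rw [hQ, sub_mul, one_mul, hPP, sub_self]
  have hQQ : Q * Q = Q := by rw [hQ, sub_mul, one_mul, mul_sub, mul_one, hPP]; abel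
  have hPplusQ : P + Q = 1 := by rw [hQ]; abel
  have hsmul : ∀ X Y : K →L[ℂ] K, X * (z • (1 : K →L[ℂ] K)) * Y = z • (X * Y) := by
    intro X Y; rw [mul_smul_comm, mul_one, smul_mul_assoc]
  have keyQMP : Q * M * P = Q * A * P := by
    rw [hM, mul_sub, sub_mul, hsmul, hQP, smul_zero, sub_zero]
  have keyPMQ : P * M * Q = P * A * Q := by
    rw [hM, mul_sub, sub_mul, hsmul, hPQ, smul_zero, sub_zero]
  have keyQMQ : Q * M * Q = Q * A * Q - z • Q := by
    rw [hM, mul_sub, sub_mul, hsmul, hQQ]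
  -- hB3 in ring form
  have hB3' : B * (Q * M * Q) = Q := by
    rw [keyQMQ, show Q * A * Q = Q * (A * Q) from mul_assoc _ _ _]
    exact hB3
  -- e1 : decomposition of `Q * M * RA = Q`
  have e1 : Q * M * P * RA + Q * M * Q * RA = Q := by
    have h : Q * M * (P + Q) * RA = Q := by
      rw [hPplusQ, mul_one, mul_assoc, hRA2, mul_one]
    calc Q * M * P * RA + Q * M * Q * RA
        = Q * M * (P + Q) * RA := by noncomm_ring
      _ = Q := h
  -- e2 : Q * RA = B - B * (Q*A*P) * RA
  have e2 : Q * RA = B - B * (Q * A * P) * RA := by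
    have h := congrArg (fun X => B * X) e1
    simp only [mul_add] at h
    have h1 : B * (Q * M * P * RA) = B * (Q * A * P) * RA := by
      rw [keyQMP]; noncomm_ring
    have h2 : B * (Q * M * Q * RA) = Q * RA := by
      rw [show Q * M * Q * RA = (Q * M * Q) * RA from rfl, ← mul_assoc, hB3']
    rw [h1, h2, hB1] at h
    exact eq_sub_of_add_eq' h
  -- e4 : P*M*P*RA + P*A*Q*RA = P
  have e4 : P * M * P * RA + P * A * Q * RA = P := by
    have h : P * M * (P + Q) * RA = P := by
      rw [hPplusQ, mul_one, mul_assoc, hRA2, mul_one]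
    calc P * M * P * RA + P * A * Q * RA
        = P * M * P * RA + P * M * Q * RA := by rw [keyPMQ]
      _ = P * M * (P + Q) * RA := by noncomm_ring
      _ = P := h
  -- substitute e2 into e4
  have e5 : P * M * P * RA + P * A * B - P * A * (B * (Q * A * P) * RA) = P := by
    rw [mul_assoc (P * A) Q RA, e2, mul_sub] at e4
    rw [add_sub_assoc]
    first | exact e4 | skip
  -- the Schur complement
  set Sc : K →L[ℂ] K := P * M * P - P * A * Q * B * Q * A * P with hSc
  have hScW : W * Sc = P := by
    rw [hSc]
    convert hW3 using 2 <;> noncomm_ring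
  have hScX : Sc * (P * RA * P) = P := by
    have hBP : B * P = 0 := by
      rw [← hB1, mul_assoc, hQP, mul_zero]
    have e6 := congrArg (fun X => X * P) e5
    rw [show (P * M * P * RA + P * A * B - P * A * (B * (Q * A * P) * RA)) * P
        = P * M * P * RA * P + P * A * (B * P)
          - P * A * B * Q * A * P * RA * P by noncomm_ring] at e6
    rw [hBP, mul_zero, add_zero] at e6
    calc Sc * (P * RA * P)
        = P * M * P * RA * P - P * A * B * Q * A * P * RA * P := by
          rw [hSc, sub_mul]
          rw [show P * A * Q * B = P * A * (Q * B) from by noncomm_ring, hB2]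
          rw [show P * M * P * (P * RA * P) = P * M * (P * P) * RA * P from by noncomm_ring,
            hPP]
          rw [show P * A * B * Q * A * P * (P * RA * P)
            = P * A * B * Q * A * (P * P) * RA * P from by noncomm_ring, hPP]
      _ = P * (P * M * P * RA * P - P * A * B * Q * A * P * RA * P) := by
          rw [mul_sub]
          congr 1
          · rw [show P * (P * M * P * RA * P) = P * P * M * P * RA * P from by noncomm_ring,
              hPP]
          · rw [show P * (P * A * B * Q * A * P * RA * P)
              = P * P * A * B * Q * A * P * RA * P from by noncomm_ring, hPP]
      _ = P * P := by rw [e6, hPP, hPP]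
      _ = P := hPP
  have hkey : P * RA * P = W := by
    have h1 : W * (Sc * (P * RA * P)) = W * P := by rw [hScX]
    rw [← mul_assoc, hScW, hW1] at h1
    rw [show P * (P * RA * P) = P * P * RA * P from by noncomm_ring, hPP] at h1
    exact h1
  -- conclude
  have hkey' : P ∘L (RA ∘L P) = W := by
    simpa [ContinuousLinearMap.mul_def, ContinuousLinearMap.comp_assoc] using hkey
  calc Γplus ∘L RA ∘L Γ₀
      = (Γplus ∘L P) ∘L RA ∘L (P ∘L Γ₀) := by rw [hPG, hGP]
    _ = Γplus ∘L (P ∘L (RA ∘L P)) ∘L Γ₀ := by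
        simp only [ContinuousLinearMap.comp_assoc]
    _ = Γplus ∘L W ∘L Γ₀ := by rw [hkey']
end

section
/- Let A be a bounded J-self-adjoint operator on the Hilbert space K with fundamental symmetry J, Γ₀ : H → K bounded, Γ₀⁺ := Γ₀*J with Γ₀⁺Γ₀ boundedly invertible, P := Γ₀(Γ₀⁺Γ₀)⁻¹Γ₀⁺, Ã := (I−P)A(I−P). For z such that A−z is invertible on K and Ã−z is invertible on (I−P)K, the operator Q̂(z) := (Γ₀⁺Γ₀)⁻¹ Γ₀⁺ { A(I−P)(Ã−z)⁻¹(I−P)A − (A−z) } Γ₀ (Γ₀⁺Γ₀)⁻¹ satisfies Q̂(z) Γ₀⁺ = (Γ₀⁺Γ₀)⁻¹ Γ₀⁺ { −I + A(I−P)(Ã−z)⁻¹(I−P) } (A − z). -/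
open scoped InnerProductSpace

/-- Corollary 1: `Q̂(z)Γ₀⁺ = (Γ₀⁺Γ₀)⁻¹Γ₀⁺{−I + A(I−P)(Ã−z)⁻¹(I−P)}(A−z)`. -/
theorem Qhat_times_gamma_plus
    {K H : Type*} [NormedAddCommGroup K] [InnerProductSpace ℂ K] [CompleteSpace K]
    [NormedAddCommGroup H] [InnerProductSpace ℂ H] [CompleteSpace H]
    (J : K →L[ℂ] K) (hJsa : IsSelfAdjoint J) (hJ2 : J ∘L J = 1)
    (A : K →L[ℂ] K) (hA : J ∘L A = (ContinuousLinearMap.adjoint A) ∘L J)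
    (Γ₀ : H →L[ℂ] K)
    (Γplus : K →L[ℂ] H) (hΓplus : Γplus = (ContinuousLinearMap.adjoint Γ₀) ∘L J)
    (S : H →L[ℂ] H) (hS1 : S ∘L (Γplus ∘L Γ₀) = 1) (hS2 : (Γplus ∘L Γ₀) ∘L S = 1)
    (P : K →L[ℂ] K) (hP : P = Γ₀ ∘L S ∘L Γplus)
    (z : ℂ)
    (RA : K →L[ℂ] K) (hRA1 : RA ∘L (A - z • 1) = 1) (hRA2 : (A - z • 1) ∘L RA = 1)
    (B : K →L[ℂ] K) (hB1 : B ∘L (1 - P) = B) (hB2 : (1 - P) ∘L B = B)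
    (hB3 : B ∘L ((1 - P) ∘L A ∘L (1 - P) - z • (1 - P)) = 1 - P)
    (hB4 : ((1 - P) ∘L A ∘L (1 - P) - z • (1 - P)) ∘L B = 1 - P) :
    (S ∘L Γplus ∘L
        (A ∘L (1 - P) ∘L B ∘L (1 - P) ∘L A - (A - z • 1)) ∘L Γ₀ ∘L S) ∘L Γplus
      = S ∘L Γplus ∘L
          (-(1 : K →L[ℂ] K) + A ∘L (1 - P) ∘L B ∘L (1 - P)) ∘L (A - z • 1) := by
  obtain ⟨C, hC⟩ : ∃ C, C = z • (1 : K →L[ℂ] K) := ⟨_, rfl⟩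
  have hB2' : (1 - P) * B = B := hB2
  have hCQ : C * (1 - P) = z • (1 - P) := by rw [hC, smul_mul_assoc, one_mul]
  have hQC : (1 - P) * C = C * (1 - P) := by
    rw [hC, smul_mul_assoc, one_mul, mul_smul_comm, mul_one]
  have hB3' : B * ((1 - P) * (A * (1 - P)) - C * (1 - P)) = 1 - P := by
    rw [hCQ]; exact hB3
  have key : B * ((1 - P) * (C - A * (1 - P))) = -(1 - P) := by
    calc B * ((1 - P) * (C - A * (1 - P)))
        = B * ((1 - P) * C) - B * ((1 - P) * (A * (1 - P))) := by noncomm_ring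
      _ = B * (C * (1 - P)) - B * ((1 - P) * (A * (1 - P))) := by rw [hQC]
      _ = -(B * ((1 - P) * (A * (1 - P)) - C * (1 - P))) := by noncomm_ring
      _ = -(1 - P) := by rw [hB3']
  have step1 :
      (A * ((1 - P) * (B * ((1 - P) * A))) - (A - C)) * P
        = (-1 + A * ((1 - P) * (B * (1 - P)))) * (A - C) - C * (1 - P) := by
    have g2 : A * (((1 - P) * B) * ((1 - P) * (C - A * (1 - P)))) = -(A * (1 - P)) := by
      rw [hB2', key, mul_neg]
    have g1 : (A * ((1 - P) * (B * ((1 - P) * A))) - (A - C)) * P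
        - ((-1 + A * ((1 - P) * (B * (1 - P)))) * (A - C) - C * (1 - P))
        = A * (((1 - P) * B) * ((1 - P) * (C - A * (1 - P))))
          + ((A - C) * (1 - P) + C * (1 - P)) := by noncomm_ring
    have g3 : A * (((1 - P) * B) * ((1 - P) * (C - A * (1 - P))))
          + ((A - C) * (1 - P) + C * (1 - P)) = 0 := by
      rw [g2]; noncomm_ring
    exact sub_eq_zero.mp (g1.trans g3)
  rw [hC] at step1
  have step1' :
      (A ∘L (1 - P) ∘L B ∘L (1 - P) ∘L A - (A - z • 1)) ∘L P
        = (-(1 : K →L[ℂ] K) + A ∘L (1 - P) ∘L B ∘L (1 - P)) ∘L (A - z • 1)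
          - (z • (1 : K →L[ℂ] K)) ∘L (1 - P) := step1
  have hGP : Γplus ∘L P = Γplus := by
    rw [hP, ← ContinuousLinearMap.comp_assoc, ← ContinuousLinearMap.comp_assoc, hS2,
      ContinuousLinearMap.one_def, ContinuousLinearMap.id_comp]
  have hGQ : Γplus ∘L ((z • (1 : K →L[ℂ] K)) ∘L (1 - P)) = 0 := by
    ext x
    have hx : Γplus (P x) = Γplus x := DFunLike.congr_fun hGP x
    simp only [ContinuousLinearMap.comp_apply, ContinuousLinearMap.smul_apply,
      ContinuousLinearMap.one_apply, ContinuousLinearMap.sub_apply,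
      ContinuousLinearMap.zero_apply, map_smul, map_sub, hx, sub_self, smul_zero]
  calc (S ∘L Γplus ∘L
        (A ∘L (1 - P) ∘L B ∘L (1 - P) ∘L A - (A - z • 1)) ∘L Γ₀ ∘L S) ∘L Γplus
      = S ∘L Γplus ∘L
        ((A ∘L (1 - P) ∘L B ∘L (1 - P) ∘L A - (A - z • 1)) ∘L P) := by
        simp only [ContinuousLinearMap.comp_assoc]; rw [← hP]
    _ = S ∘L Γplus ∘L
          ((-(1 : K →L[ℂ] K) + A ∘L (1 - P) ∘L B ∘L (1 - P)) ∘L (A - z • 1)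
            - (z • (1 : K →L[ℂ] K)) ∘L (1 - P)) := by rw [step1']
    _ = S ∘L Γplus ∘L
          (-(1 : K →L[ℂ] K) + A ∘L (1 - P) ∘L B ∘L (1 - P)) ∘L (A - z • 1) := by
        rw [ContinuousLinearMap.comp_sub, hGQ, sub_zero]
end

section
/- Setup as before: A bounded J-self-adjoint on K, Γ₀⁺Γ₀ boundedly invertible, P := Γ₀(Γ₀⁺Γ₀)⁻¹Γ₀⁺, Ã := (I−P)A(I−P). Fix z₀ with A−z₀ invertible and Ã−z₀ invertible on (I−P)K, and define R := (A−z₀)⁻¹(I + PA(I−P)(Ã−z₀)⁻¹)(I−P). Then ker R = range P; in particular, every vector of range Γ₀ lies in ker R, and conversely if R((I−P)y) = 0 then (I−P)y = 0. -/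
/-!
Write `R = (A - z₀)⁻¹ T (I - P)` with `T = I + P X`, where the form of `X` does not matter.
Since `(I - P) P = 0`, the factor `I - P` absorbs `T` from the left: `(I - P) T (I - P) = I - P`.
Hence `T (I - P) y = 0` forces `(I - P) y = 0`, so `ker R = ker (I - P) = range P`, the injective
factor `(A - z₀)⁻¹` not changing the kernel.
-/

theorem IsIdempotentElem.one_sub_mul_one_add_mul {S : Type*} [Ring S] {p : S}
    (hp : IsIdempotentElem p) (x : S) : (1 - p) * (1 + p * x) = 1 - p := by
  rw [mul_add, mul_one, ← mul_assoc, hp.one_sub_mul_self, zero_mul, add_zero]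

namespace LinearMap

variable {R M : Type*} [Ring R] [AddCommGroup M] [Module R M]

theorem ker_mul_eq_of_mul_mul_eq_self {q m : Module.End R M} (h : q * m * q = q) :
    ker (m * q) = ker q := by
  refine le_antisymm (fun x hx => ?_) (ker_le_ker_comp q m)
  rw [mem_ker] at hx ⊢
  rw [← h, Module.End.mul_apply, Module.End.mul_apply, ← Module.End.mul_apply m, hx, map_zero]

theorem ker_mul_one_add_mul_mul_one_sub {t p : Module.End R M} (ht : ker t = ⊥)
    (hp : IsIdempotentElem p) (x : Module.End R M) :
    ker (t * (1 + p * x) * (1 - p)) = ker (1 - p) := by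
  rw [mul_assoc, Module.End.mul_eq_comp, ker_comp_of_ker_eq_bot _ ht]
  exact ker_mul_eq_of_mul_mul_eq_self (by rw [hp.one_sub_mul_one_add_mul, hp.one_sub.eq])

end LinearMap

namespace ContinuousLinearMap

variable {R M N : Type*} [Semiring R] [TopologicalSpace M] [AddCommMonoid M] [Module R M]
  [TopologicalSpace N] [AddCommMonoid N] [Module R N]

theorem comp_comp_comp_eq_of_comp_eq_one {Γ : N →L[R] M} {Γ' : M →L[R] N} {S : N →L[R] N}
    (hS : S ∘L (Γ' ∘L Γ) = 1) : (Γ ∘L S ∘L Γ') ∘L Γ = Γ := by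
  rw [comp_assoc, comp_assoc, hS]
  rfl

theorem isIdempotentElem_comp_comp_of_comp_eq_one {Γ : N →L[R] M} {Γ' : M →L[R] N}
    {S : N →L[R] N} (hS : S ∘L (Γ' ∘L Γ) = 1) : IsIdempotentElem (Γ ∘L S ∘L Γ') := by
  change (Γ ∘L S ∘L Γ') ∘L Γ ∘L S ∘L Γ' = Γ ∘L S ∘L Γ'
  rw [← comp_assoc _ Γ, comp_comp_comp_eq_of_comp_eq_one hS]

end ContinuousLinearMap

theorem resolvent_of_inverse_kernel_general
    {K H : Type*} [NormedAddCommGroup K] [InnerProductSpace ℂ K]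
    [NormedAddCommGroup H] [InnerProductSpace ℂ H]
    (A : K →L[ℂ] K)
    (Γ₀ : H →L[ℂ] K)
    (Γplus : K →L[ℂ] H)
    (S : H →L[ℂ] H) (hS1 : S ∘L (Γplus ∘L Γ₀) = 1)
    (P : K →L[ℂ] K) (hP : P = Γ₀ ∘L S ∘L Γplus)
    (z₀ : ℂ)
    (RA : K →L[ℂ] K) (hRA2 : (A - z₀ • 1) ∘L RA = 1)
    (B : K →L[ℂ] K)
    (R : K →L[ℂ] K)
    (hR : R = RA ∘L (1 + P ∘L A ∘L (1 - P) ∘L B) ∘L (1 - P)) :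
    LinearMap.ker (R : K →ₗ[ℂ] K) = LinearMap.range (P : K →ₗ[ℂ] K) ∧
    (∀ h : H, R (Γ₀ h) = 0) ∧
    (∀ y : K, R ((1 - P) y) = 0 → (1 - P) y = 0) := by
  have hPidem : IsIdempotentElem P :=
    hP ▸ ContinuousLinearMap.isIdempotentElem_comp_comp_of_comp_eq_one hS1
  have hPlin := ContinuousLinearMap.IsIdempotentElem.toLinearMap hPidem
  have hRA : LinearMap.ker (RA : K →ₗ[ℂ] K) = ⊥ :=
    LinearMap.ker_eq_bot_of_inverse (congrArg ContinuousLinearMap.toLinearMap hRA2)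
  have hker : LinearMap.ker (R : K →ₗ[ℂ] K) = LinearMap.ker (1 - P : K →ₗ[ℂ] K) := by
    rw [hR]
    exact LinearMap.ker_mul_one_add_mul_mul_one_sub hRA hPlin (A ∘L (1 - P) ∘L B)
  have hrange := LinearMap.IsIdempotentElem.range_eq_ker_one_sub hPlin
  refine ⟨hker.trans hrange.symm, fun h => ?_, fun y hy => ?_⟩
  · show Γ₀ h ∈ LinearMap.ker (R : K →ₗ[ℂ] K)
    rw [hker, ← hrange]
    refine ⟨Γ₀ h, ?_⟩
    rw [hP]
    exact DFunLike.congr_fun (ContinuousLinearMap.comp_comp_comp_eq_of_comp_eq_one hS1) h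
  · have hy' : (1 - P) y ∈ LinearMap.ker (1 - P : K →ₗ[ℂ] K) := hker ▸ hy
    change (1 - P) ((1 - P) y) = 0 at hy'
    rwa [← mul_apply_eq_comp, hPidem.one_sub.eq] at hy'

/-- Corollary 2: for `R = (A−z₀)⁻¹(I + PA(I−P)(Ã−z₀)⁻¹)(I−P)` one has
`ker R = range P`; in particular every vector of `range Γ₀` lies in `ker R`, and
`R((I−P)y) = 0` forces `(I−P)y = 0`. -/
theorem resolvent_of_inverse_kernel
    {K H : Type*} [NormedAddCommGroup K] [InnerProductSpace ℂ K] [CompleteSpace K]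
    [NormedAddCommGroup H] [InnerProductSpace ℂ H] [CompleteSpace H]
    (J : K →L[ℂ] K) (hJsa : IsSelfAdjoint J) (hJ2 : J ∘L J = 1)
    (A : K →L[ℂ] K) (hA : J ∘L A = (ContinuousLinearMap.adjoint A) ∘L J)
    (Γ₀ : H →L[ℂ] K)
    (Γplus : K →L[ℂ] H) (hΓplus : Γplus = (ContinuousLinearMap.adjoint Γ₀) ∘L J)
    (S : H →L[ℂ] H) (hS1 : S ∘L (Γplus ∘L Γ₀) = 1) (hS2 : (Γplus ∘L Γ₀) ∘L S = 1)
    (P : K →L[ℂ] K) (hP : P = Γ₀ ∘L S ∘L Γplus)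
    (z₀ : ℂ)
    (RA : K →L[ℂ] K) (hRA1 : RA ∘L (A - z₀ • 1) = 1) (hRA2 : (A - z₀ • 1) ∘L RA = 1)
    (B : K →L[ℂ] K) (hB1 : B ∘L (1 - P) = B) (hB2 : (1 - P) ∘L B = B)
    (hB3 : B ∘L ((1 - P) ∘L A ∘L (1 - P) - z₀ • (1 - P)) = 1 - P)
    (hB4 : ((1 - P) ∘L A ∘L (1 - P) - z₀ • (1 - P)) ∘L B = 1 - P)
    (R : K →L[ℂ] K)
    (hR : R = RA ∘L (1 + P ∘L A ∘L (1 - P) ∘L B) ∘L (1 - P)) :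
    LinearMap.ker (R : K →ₗ[ℂ] K) = LinearMap.range (P : K →ₗ[ℂ] K) ∧
    (∀ h : H, R (Γ₀ h) = 0) ∧
    (∀ y : K, R ((1 - P) y) = 0 → (1 - P) y = 0) :=
  resolvent_of_inverse_kernel_general A Γ₀ Γplus S hS1 P hP z₀ RA hRA2 B R hR
end

section
/- Let A be a bounded J-self-adjoint operator on a Hilbert space K with fundamental symmetry J, Γ₀ : H → K bounded, Γ₀⁺ := Γ₀*J, and Q(z) := Γ₀⁺(A−z)⁻¹Γ₀ for z in the resolvent set of A. If Γ₀⁺Γ₀ is injective and for some f ∈ H we have (f, Q(z)h) = 0 for all h ∈ H and all z in the resolvent set of A, then f = 0. (Key computation: lim_{t→∞} t·Q(it) = −Γ₀⁺Γ₀ in the weak sense, i.e. for all f,h: lim_{t→∞} t(f, Q(it)h) = −(Γ₀⁺Γ₀ f, h).) -/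
open scoped InnerProductSpace

/-!
For large `|z|` the resolvent identity `z (A - z)⁻¹ = -1 + A (A - z)⁻¹` together with
`(A - z)⁻¹ → 0` gives `z Q(z) → -Γ₀⁺Γ₀`, so `(f, Γ₀⁺Γ₀ h) = 0` for every `h`. As `Γ₀⁺Γ₀ = Γ₀* J Γ₀`
is self-adjoint, this says `Γ₀⁺Γ₀ f = 0`, and injectivity gives `f = 0`.
-/

open Filter Bornology Topology

theorem Ring.inverse_neg {R : Type*} [Ring R] (x : R) : Ring.inverse (-x) = -Ring.inverse x := by
  by_cases hx : IsUnit x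
  · lift x to Rˣ using hx
    rw [← Units.val_neg, Ring.inverse_unit, Ring.inverse_unit, inv_neg, Units.val_neg]
  · rw [Ring.inverse_non_unit _ hx, Ring.inverse_non_unit _ (by rwa [IsUnit.neg_iff]), neg_zero]

theorem spectrum.smul_resolvent_eq_one_add_mul {R A : Type*} [CommRing R] [Ring A] [Algebra R A]
    {a : A} {z : R} (hz : IsUnit (algebraMap R A z - a)) :
    z • resolvent a z = 1 + a * resolvent a z := by
  rw [resolvent, Algebra.smul_def, ← Ring.mul_inverse_cancel _ hz, sub_mul, sub_add_cancel]

section BanachAlgebra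

variable {𝕜 A : Type*} [NontriviallyNormedField 𝕜] [NormedRing A] [NormedAlgebra 𝕜 A]
  [CompleteSpace A]

theorem spectrum.tendsto_smul_resolvent_cobounded (a : A) :
    Tendsto (fun z : 𝕜 ↦ z • resolvent a z) (cobounded 𝕜) (𝓝 1) := by
  have hlim : Tendsto (fun z : 𝕜 ↦ 1 + a * resolvent a z) (cobounded 𝕜) (𝓝 1) := by
    simpa using tendsto_const_nhds.add ((resolvent_tendsto_cobounded a).const_mul a)
  refine hlim.congr' ?_
  filter_upwards [eventually_isUnit_resolvent a] with z hz
  exact (smul_resolvent_eq_one_add_mul (isUnit_resolvent.mpr hz)).symm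

theorem tendsto_smul_inverse_sub_smul_one_cobounded (a : A) :
    Tendsto (fun z : 𝕜 ↦ z • Ring.inverse (a - z • (1 : A))) (cobounded 𝕜) (𝓝 (-1)) := by
  have h (z : 𝕜) : Ring.inverse (a - z • (1 : A)) = -resolvent a z := by
    rw [resolvent, ← Ring.inverse_neg, neg_sub, Algebra.algebraMap_eq_smul_one]
  simpa only [h, smul_neg] using (spectrum.tendsto_smul_resolvent_cobounded a).neg

theorem eventually_isUnit_sub_smul_one_cobounded (a : A) :
    ∀ᶠ z in cobounded 𝕜, IsUnit (a - z • (1 : A)) := by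
  filter_upwards [spectrum.eventually_isUnit_resolvent a] with z hz
  rw [← IsUnit.neg_iff, neg_sub, ← Algebra.algebraMap_eq_smul_one]
  exact spectrum.isUnit_resolvent.mpr hz

end BanachAlgebra

theorem tendsto_smul_inner_comp_inverse_sub_smul_one_comp
    {𝕜 E K H : Type*} [RCLike 𝕜] [NormedAddCommGroup E] [NormedSpace 𝕜 E]
    [NormedAddCommGroup K] [NormedSpace 𝕜 K] [CompleteSpace K]
    [NormedAddCommGroup H] [InnerProductSpace 𝕜 H]
    (B : K →L[𝕜] K) (Γ : E →L[𝕜] K) (Γ' : K →L[𝕜] H) (f : H) (h : E) :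
    Tendsto (fun z : 𝕜 ↦ z * ⟪f, (Γ' ∘L Ring.inverse (B - z • (1 : K →L[𝕜] K)) ∘L Γ) h⟫_𝕜)
      (cobounded 𝕜) (𝓝 (-⟪f, (Γ' ∘L Γ) h⟫_𝕜)) := by
  have hcont : Continuous fun X : K →L[𝕜] K ↦ ⟪f, (Γ' ∘L X ∘L Γ) h⟫_𝕜 := by fun_prop
  simpa [Function.comp_def, inner_smul_right]
    using (hcont.tendsto (-1)).comp (tendsto_smul_inverse_sub_smul_one_cobounded (𝕜 := 𝕜) B)

theorem weak_annihilation_implies_zero_general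
    {K H : Type*} [NormedAddCommGroup K] [InnerProductSpace ℂ K] [CompleteSpace K]
    [NormedAddCommGroup H] [InnerProductSpace ℂ H] [CompleteSpace H]
    (J : K →L[ℂ] K) (hJsa : IsSelfAdjoint J)
    (A : K →L[ℂ] K)
    (Γ₀ : H →L[ℂ] K)
    (Γplus : K →L[ℂ] H) (hΓplus : Γplus = (ContinuousLinearMap.adjoint Γ₀) ∘L J)
    (hinj : Function.Injective (Γplus ∘L Γ₀))
    (f : H)
    (hf : ∀ z : ℂ, IsUnit (A - z • (1 : K →L[ℂ] K)) →
      ∀ h : H, ⟪f, (Γplus ∘L Ring.inverse (A - z • (1 : K →L[ℂ] K)) ∘L Γ₀) h⟫_ℂ = 0) :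
    f = 0 := by
  have hT : IsSelfAdjoint (Γplus ∘L Γ₀) := hΓplus ▸ hJsa.adjoint_conj Γ₀
  have horth (h : H) : ⟪f, (Γplus ∘L Γ₀) h⟫_ℂ = 0 := by
    have hzero : ∀ᶠ z in cobounded ℂ,
        z * ⟪f, (Γplus ∘L Ring.inverse (A - z • (1 : K →L[ℂ] K)) ∘L Γ₀) h⟫_ℂ = 0 := by
      filter_upwards [eventually_isUnit_sub_smul_one_cobounded A] with z hz
      rw [hf z hz h, mul_zero]
    simpa using tendsto_nhds_unique
      (tendsto_smul_inner_comp_inverse_sub_smul_one_comp A Γ₀ Γplus f h)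
      (tendsto_const_nhds.congr' (EventuallyEq.symm hzero))
  have hTf : (Γplus ∘L Γ₀) f = 0 := by
    rw [← hT.adjoint_eq]
    exact ext_inner_right ℂ fun h ↦ by
      rw [ContinuousLinearMap.adjoint_inner_left, horth, inner_zero_left]
  exact (injective_iff_map_eq_zero _).1 hinj f hTf

/-- Lemma 3 (ii): if `Γ₀⁺Γ₀` is injective and
`(f, Q(z)h) = 0` for all `h` and all `z` in the resolvent set of `A`
(where `Q(z) = Γ₀⁺(A−z)⁻¹Γ₀`), then `f = 0`. -/
theorem weak_annihilation_implies_zero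
    {K H : Type*} [NormedAddCommGroup K] [InnerProductSpace ℂ K] [CompleteSpace K]
    [NormedAddCommGroup H] [InnerProductSpace ℂ H] [CompleteSpace H]
    (J : K →L[ℂ] K) (hJsa : IsSelfAdjoint J) (hJ2 : J ∘L J = 1)
    (A : K →L[ℂ] K) (hA : J ∘L A = (ContinuousLinearMap.adjoint A) ∘L J)
    (Γ₀ : H →L[ℂ] K)
    (Γplus : K →L[ℂ] H) (hΓplus : Γplus = (ContinuousLinearMap.adjoint Γ₀) ∘L J)
    (hinj : Function.Injective (Γplus ∘L Γ₀))
    (f : H)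
    (hf : ∀ z : ℂ, IsUnit (A - z • (1 : K →L[ℂ] K)) →
      ∀ h : H, ⟪f, (Γplus ∘L Ring.inverse (A - z • (1 : K →L[ℂ] K)) ∘L Γ₀) h⟫_ℂ = 0) :
    f = 0 :=
  weak_annihilation_implies_zero_general J hJsa A Γ₀ Γplus hΓplus hinj f hf
end
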